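/- For the one-group shrinkage prior with a > 0 and any fixed τ ∈ (0,1), the posterior mean satisfies lim_{|x| → ∞} |T_τ(x) − x| = 0; that is, large observations are left asymptotically unshrunk for any fixed value of the global shrinkage parameter. -/

import Mathlib

open MeasureTheory Filter Set

noncomputable section

namespace OneGroup

/-- A one-group (global-local) shrinkage prior: the local variance `λ²` has density
`π(λ²) = K (λ²)^{-a-1} L(λ²)` on `(0,∞)`, where `L` is a positive, measurable,
non-constant slowly varying function, bounded above by `M`, and bounded below by
`c₀` on `[t₀, ∞)`. -/
structure Prior where
  K : ℝ
  a : ℝ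
  L : ℝ → ℝ
  M : ℝ
  c₀ : ℝ
  t₀ : ℝ
  K_pos : 0 < K
  a_pos : 0 < a
  L_pos : ∀ t : ℝ, 0 < t → 0 < L t
  L_meas : Measurable L
  L_slow : ∀ c : ℝ, 0 < c → Tendsto (fun t => L (c * t) / L t) atTop (nhds 1)
  L_nonconst : ∃ s : ℝ, 0 < s ∧ ∃ t : ℝ, 0 < t ∧ L s ≠ L t
  M_pos : 0 < M
  L_le : ∀ t : ℝ, 0 < t → L t ≤ M
  c₀_pos : 0 < c₀
  t₀_pos : 0 < t₀
  L_ge : ∀ t : ℝ, t₀ ≤ t → c₀ ≤ L t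

/-- The (unnormalized) posterior weight, as a function of `t = λ²`, entering all
posterior expectations of functions of the shrinkage coefficient `κ = 1/(1+tτ²)`. -/
def wt (P : Prior) (x τ t : ℝ) : ℝ :=
  (1 + t * τ ^ 2) ^ (-(1:ℝ)/2) * t ^ (-P.a - 1) * P.L t *
    Real.exp (-x ^ 2 / (2 * (1 + t * τ ^ 2)))

/-- Posterior expectation `E(g(κ) | x, τ)` of a function `g` of the shrinkage
coefficient `κ = 1/(1+λ²τ²)`. -/
def postExp (P : Prior) (g : ℝ → ℝ) (x τ : ℝ) : ℝ :=
  (∫ t in Ioi (0:ℝ), g (1 / (1 + t * τ ^ 2)) * wt P x τ t) /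
    (∫ t in Ioi (0:ℝ), wt P x τ t)

/-- The posterior mean `T_τ(x) = x (1 - E(κ | x, τ))`. -/
def T (P : Prior) (τ x : ℝ) : ℝ := x * (1 - postExp P (fun κ => κ) x τ)

/-- The marginal prior density `p_τ(θ)` of `θ`. -/
def pdens (P : Prior) (τ θ : ℝ) : ℝ :=
  ∫ u in Ioi (0:ℝ),
    (Real.sqrt (2 * Real.pi * u * τ ^ 2))⁻¹ * Real.exp (-θ ^ 2 / (2 * u * τ ^ 2)) *
      (P.K * u ^ (-P.a - 1) * P.L u)

/-- The unnormalized posterior density of `θ` given an observation `x ~ N(θ,1)`. -/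
def postw (P : Prior) (τ x θ : ℝ) : ℝ := Real.exp (-(x - θ) ^ 2 / 2) * pdens P τ θ

/-- The `k`-th posterior moment of `θ` given `x`. -/
def postMoment (P : Prior) (τ x : ℝ) (k : ℕ) : ℝ :=
  (∫ θ : ℝ, θ ^ k * postw P τ x θ) / (∫ θ : ℝ, postw P τ x θ)

/-- The posterior variance `Var(θ | x)`. -/
def postVar (P : Prior) (τ x : ℝ) : ℝ := postMoment P τ x 2 - (postMoment P τ x 1) ^ 2

/-- The standard normal density. -/
def gauss (z : ℝ) : ℝ := (Real.sqrt (2 * Real.pi))⁻¹ * Real.exp (-z ^ 2 / 2)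

/-- Expectation of `f(X)` for `X ~ N(θ, 1)`. -/
def E1 (θ : ℝ) (f : ℝ → ℝ) : ℝ := ∫ x : ℝ, f x * gauss (x - θ)

/-- Expectation of `f(X)` for `X ~ N_n(θ, I_n)`. -/
def EN (n : ℕ) (θ : Fin n → ℝ) (f : (Fin n → ℝ) → ℝ) : ℝ :=
  ∫ x : Fin n → ℝ, f x * ∏ i, gauss (x i - θ i)

/-- The posterior probability `Π(A | x)` of a set `A ⊆ ℝⁿ` given data `x`,
for the coordinatewise-independent posterior. -/
def postProb (P : Prior) (τ : ℝ) {n : ℕ} (x : Fin n → ℝ) (A : Set (Fin n → ℝ)) : ℝ :=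
  (∫ θ in A, ∏ i, postw P τ (x i) (θ i)) /
    (∫ θ : Fin n → ℝ, ∏ i, postw P τ (x i) (θ i))

/-- The set `l₀[p]` of nearly black vectors in `ℝⁿ`. -/
def nearlyBlack (n p : ℕ) : Set (Fin n → ℝ) :=
  {θ | (Finset.univ.filter fun i => θ i ≠ 0).card ≤ p}

end OneGroup

open OneGroup

/-!
Write `s = x²`. Since `T_τ(x) - x = -x E(κ | x, τ)`, it suffices that
`E(κ | x, τ) = O(s^{-r})` for some `r ∈ (1/2, 1)`.

The denominator of `E(κ | x, τ)` is at least its integral over the window `λ² ∈ (s, 2s]`,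
where the weight is of order `s^{-a-3/2}`; hence it is `≳ s^{-a-1/2}`. In the numerator the bound
`e^{-u} ≤ q^q u^{-q}` turns the Gaussian factor into `s^{-q}` times a power of `λ²`: on `(0, 1]`
what remains is dominated by the prior itself, and on `(1, ∞)` the factor
`κ (1 + λ²τ²)^{-1/2} ≤ (λ²τ²)^{-3/2}` keeps it integrable as long as `q < a + 3/2`. With
`q = a + 1/2 + r` the ratio is `O(s^{-r})`.
-/

open Real

lemma exp_neg_le_rpow_mul_rpow_neg {q u : ℝ} (hq : 0 < q) (hu : 0 < u) :
    exp (-u) ≤ q ^ q * u ^ (-q) := by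
  have h : u / q ≤ exp (u / q - 1) := by linarith [add_one_le_exp (u / q - 1)]
  have hpow : (u / q) ^ q ≤ exp (u - q) := by
    calc (u / q) ^ q ≤ exp (u / q - 1) ^ q := by gcongr
      _ = exp (u - q) := by rw [← exp_mul]; congr 1; field_simp
  rw [div_rpow hu.le hq.le, div_le_iff₀ (by positivity)] at hpow
  rw [rpow_neg hu.le, ← div_eq_mul_inv, le_div_iff₀ (by positivity)]
  calc exp (-u) * u ^ q ≤ exp (-u) * (exp (u - q) * q ^ q) := by gcongr
    _ = exp (-q) * q ^ q := by rw [← mul_assoc, ← exp_add]; ring_nf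
    _ ≤ q ^ q := mul_le_of_le_one_left (by positivity) (exp_le_one_iff.mpr (by linarith))

lemma exp_neg_sq_div_le {q c x : ℝ} (hq : 0 < q) (hc : 0 < c) (hx : x ≠ 0) :
    exp (-x ^ 2 / c) ≤ q ^ q * c ^ q * (x ^ 2) ^ (-q) := by
  have hx2 : 0 < x ^ 2 := by positivity
  calc exp (-x ^ 2 / c) = exp (-(x ^ 2 / c)) := by rw [neg_div]
    _ ≤ q ^ q * (x ^ 2 / c) ^ (-q) := exp_neg_le_rpow_mul_rpow_neg hq (by positivity)
    _ = q ^ q * c ^ q * (x ^ 2) ^ (-q) := by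
      rw [div_rpow hx2.le hc.le, rpow_neg hx2.le, rpow_neg hc.le]; field_simp

lemma tendsto_sq_cocompact : Tendsto (fun x : ℝ => x ^ 2) (cocompact ℝ) atTop := by
  simpa only [Function.comp_def, Real.norm_eq_abs, sq_abs] using
    (tendsto_pow_atTop two_ne_zero).comp (tendsto_norm_cocompact_atTop (E := ℝ))

namespace OneGroup

namespace Prior

variable (P : Prior) {t : ℝ}

/-- The prior density `π(λ²)` at `λ² = t`, without the normalising constant `K`. -/
def kernel (t : ℝ) : ℝ := t ^ (-P.a - 1) * P.L t

lemma kernel_nonneg (ht : 0 < t) : 0 ≤ P.kernel t :=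
  mul_nonneg (rpow_nonneg ht.le _) (P.L_pos t ht).le

lemma kernel_le (ht : 0 < t) : P.kernel t ≤ P.M * t ^ (-P.a - 1) := by
  rw [kernel, mul_comm]
  exact mul_le_mul_of_nonneg_right (P.L_le t ht) (rpow_nonneg ht.le _)

@[fun_prop]
lemma measurable_kernel : Measurable P.kernel := by
  have := P.L_meas
  unfold kernel
  fun_prop

lemma integrableOn_kernel_Ioi_one : IntegrableOn P.kernel (Ioi 1) := by
  have hpow : IntegrableOn (fun t : ℝ => t ^ (-P.a - 1)) (Ioi 1) :=
    integrableOn_Ioi_rpow_of_lt (by linarith [P.a_pos]) one_pos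
  refine (hpow.const_mul P.M).mono' P.measurable_kernel.aestronglyMeasurable ?_
  filter_upwards [ae_restrict_mem measurableSet_Ioi] with t ht
  have ht0 : (0 : ℝ) < t := one_pos.trans ht
  rw [Real.norm_of_nonneg (P.kernel_nonneg ht0)]
  exact P.kernel_le ht0

lemma integrableOn_kernel_Ioi_zero (h : IntegrableOn P.kernel (Ioc 0 1)) :
    IntegrableOn P.kernel (Ioi 0) := by
  rw [← Ioc_union_Ioi_eq_Ioi zero_le_one]
  exact h.union P.integrableOn_kernel_Ioi_one

end Prior

section Weight

variable (P : Prior) {x τ t : ℝ}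

lemma wt_eq (x τ t : ℝ) : wt P x τ t =
    (1 + t * τ ^ 2) ^ (-(1:ℝ)/2) * P.kernel t * exp (-x ^ 2 / (2 * (1 + t * τ ^ 2))) := by
  unfold wt Prior.kernel
  ring

lemma wt_nonneg (ht : 0 < t) : 0 ≤ wt P x τ t := by
  have := P.kernel_nonneg ht
  rw [wt_eq]
  positivity

@[fun_prop]
lemma measurable_wt : Measurable (wt P x τ) := by
  have := P.L_meas
  unfold wt
  fun_prop

lemma wt_le_kernel (ht : 0 < t) : wt P x τ t ≤ P.kernel t := by
  have hk := P.kernel_nonneg ht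
  have h1 : (1 + t * τ ^ 2) ^ (-(1:ℝ)/2) ≤ 1 :=
    rpow_le_one_of_one_le_of_nonpos (by nlinarith [sq_nonneg τ]) (by norm_num)
  have h2 : exp (-x ^ 2 / (2 * (1 + t * τ ^ 2))) ≤ 1 := by
    rw [exp_le_one_iff, neg_div, neg_nonpos]
    positivity
  rw [wt_eq]
  calc _ ≤ 1 * P.kernel t * 1 := by gcongr
    _ = P.kernel t := by ring

lemma integrableOn_wt (h : IntegrableOn P.kernel (Ioi 0)) : IntegrableOn (wt P x τ) (Ioi 0) := by
  refine h.mono' (measurable_wt P).aestronglyMeasurable ?_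
  filter_upwards [ae_restrict_mem measurableSet_Ioi] with t ht
  rw [Real.norm_of_nonneg (wt_nonneg P ht)]
  exact wt_le_kernel P ht

lemma mul_kernel_le_wt (ht : t ∈ Ioc 0 1) :
    (1 + τ ^ 2) ^ (-(1:ℝ)/2) * exp (-x ^ 2 / 2) * P.kernel t ≤ wt P x τ t := by
  obtain ⟨ht0, ht1⟩ := ht
  have hk := P.kernel_nonneg ht0
  have hτt : t * τ ^ 2 ≤ τ ^ 2 := mul_le_of_le_one_left (sq_nonneg τ) ht1
  have h1 : (1 + τ ^ 2) ^ (-(1:ℝ)/2) ≤ (1 + t * τ ^ 2) ^ (-(1:ℝ)/2) :=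
    rpow_le_rpow_of_nonpos (by positivity) (by linarith) (by norm_num)
  have h2 : exp (-x ^ 2 / 2) ≤ exp (-x ^ 2 / (2 * (1 + t * τ ^ 2))) := by
    rw [exp_le_exp, neg_div, neg_div, neg_le_neg_iff]
    exact div_le_div_of_nonneg_left (sq_nonneg x) two_pos (by nlinarith [sq_nonneg τ])
  rw [wt_eq]
  calc _ = (1 + τ ^ 2) ^ (-(1:ℝ)/2) * P.kernel t * exp (-x ^ 2 / 2) := by ring
    _ ≤ _ := by gcongr

lemma integrableOn_kernel_of_integrableOn_wt (h : IntegrableOn (wt P x τ) (Ioi 0)) :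
    IntegrableOn P.kernel (Ioc 0 1) := by
  have hc : 0 < (1 + τ ^ 2) ^ (-(1:ℝ)/2) * exp (-x ^ 2 / 2) := by positivity
  refine ((h.mono_set Ioc_subset_Ioi_self).const_mul
    ((1 + τ ^ 2) ^ (-(1:ℝ)/2) * exp (-x ^ 2 / 2))⁻¹).mono'
    P.measurable_kernel.aestronglyMeasurable ?_
  filter_upwards [ae_restrict_mem measurableSet_Ioc] with t ht
  rw [Real.norm_of_nonneg (P.kernel_nonneg ht.1), ← div_eq_inv_mul, le_div_iff₀' hc]
  exact mul_kernel_le_wt P ht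

lemma kappa_mem_Ioc (τ : ℝ) (ht : 0 ≤ t) : 1 / (1 + t * τ ^ 2) ∈ Ioc 0 1 := by
  have : 0 ≤ t * τ ^ 2 := by positivity
  exact ⟨by positivity, by rw [div_le_one (by positivity)]; linarith⟩

lemma integrableOn_kappa_mul_wt (h : IntegrableOn P.kernel (Ioi 0)) :
    IntegrableOn (fun t => 1 / (1 + t * τ ^ 2) * wt P x τ t) (Ioi 0) := by
  refine (integrableOn_wt P (x := x) (τ := τ) h).mono' (by fun_prop) ?_
  filter_upwards [ae_restrict_mem measurableSet_Ioi] with t ht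
  obtain ⟨hκ0, hκ1⟩ := kappa_mem_Ioc τ (le_of_lt ht)
  rw [Real.norm_of_nonneg (mul_nonneg hκ0.le (wt_nonneg P ht))]
  exact mul_le_of_le_one_left (wt_nonneg P ht) hκ1

lemma integral_kappa_mul_wt_nonneg (x τ : ℝ) :
    0 ≤ ∫ t in Ioi 0, 1 / (1 + t * τ ^ 2) * wt P x τ t :=
  setIntegral_nonneg measurableSet_Ioi fun _ ht =>
    mul_nonneg (kappa_mem_Ioc τ (le_of_lt ht)).1.le (wt_nonneg P ht)

lemma kappa_mul_wt_le_of_mem_Ioc {q : ℝ} (hq : 0 < q) (hx : x ≠ 0) (ht : t ∈ Ioc 0 1) :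
    1 / (1 + t * τ ^ 2) * wt P x τ t ≤
      q ^ q * (2 * (1 + τ ^ 2)) ^ q * (x ^ 2) ^ (-q) * P.kernel t := by
  obtain ⟨ht0, ht1⟩ := ht
  have hk := P.kernel_nonneg ht0
  have hτt : t * τ ^ 2 ≤ τ ^ 2 := mul_le_of_le_one_left (sq_nonneg τ) ht1
  have hκ := (kappa_mem_Ioc τ ht0.le).2
  have h1 : (1 + t * τ ^ 2) ^ (-(1:ℝ)/2) ≤ 1 :=
    rpow_le_one_of_one_le_of_nonpos (by nlinarith [sq_nonneg τ]) (by norm_num)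
  have h2 : exp (-x ^ 2 / (2 * (1 + t * τ ^ 2))) ≤ exp (-x ^ 2 / (2 * (1 + τ ^ 2))) := by
    rw [exp_le_exp, neg_div, neg_div, neg_le_neg_iff]
    exact div_le_div_of_nonneg_left (sq_nonneg x) (by positivity) (by linarith)
  rw [wt_eq]
  calc _ ≤ 1 * (1 * P.kernel t * exp (-x ^ 2 / (2 * (1 + τ ^ 2)))) := by gcongr
    _ ≤ 1 * (1 * P.kernel t * (q ^ q * (2 * (1 + τ ^ 2)) ^ q * (x ^ 2) ^ (-q))) := by
      gcongr
      exact exp_neg_sq_div_le hq (by positivity) hx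
    _ = _ := by ring

lemma kappa_mul_wt_le_of_one_lt {q : ℝ} (hτ : 0 < τ) (hq : 0 < q) (hx : x ≠ 0) (ht : 1 < t) :
    1 / (1 + t * τ ^ 2) * wt P x τ t ≤ q ^ q * (2 * (1 + τ ^ 2)) ^ q * (x ^ 2) ^ (-q) *
      (P.M * (τ ^ 2) ^ (-(3:ℝ)/2) * t ^ (q - P.a - 5/2)) := by
  have ht0 : 0 < t := one_pos.trans ht
  have hk := P.kernel_nonneg ht0
  have hkM := P.kernel_le ht0
  have hM := P.M_pos
  have hκ : 1 / (1 + t * τ ^ 2) * (1 + t * τ ^ 2) ^ (-(1:ℝ)/2) =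
      (1 + t * τ ^ 2) ^ (-(3:ℝ)/2) := by
    rw [show -(3:ℝ)/2 = -1 + -(1:ℝ)/2 by norm_num, rpow_add (by positivity), rpow_neg_one,
      one_div]
  have h1 : (1 + t * τ ^ 2) ^ (-(3:ℝ)/2) ≤ t ^ (-(3:ℝ)/2) * (τ ^ 2) ^ (-(3:ℝ)/2) := by
    rw [← mul_rpow ht0.le (sq_nonneg τ)]
    exact rpow_le_rpow_of_nonpos (by positivity) (by linarith) (by norm_num)
  have h2 : exp (-x ^ 2 / (2 * (1 + t * τ ^ 2))) ≤
      q ^ q * (2 * (1 + τ ^ 2)) ^ q * t ^ q * (x ^ 2) ^ (-q) := by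
    calc _ ≤ exp (-x ^ 2 / (2 * (1 + τ ^ 2) * t)) := by
          rw [exp_le_exp, neg_div, neg_div, neg_le_neg_iff]
          exact div_le_div_of_nonneg_left (sq_nonneg x) (by positivity) (by nlinarith)
      _ ≤ q ^ q * (2 * (1 + τ ^ 2) * t) ^ q * (x ^ 2) ^ (-q) :=
          exp_neg_sq_div_le hq (by positivity) hx
      _ = _ := by rw [mul_rpow (by positivity) ht0.le]; ring
  have htpow : t ^ (-(3:ℝ)/2) * t ^ (-P.a - 1) * t ^ q = t ^ (q - P.a - 5/2) := by
    rw [← rpow_add ht0, ← rpow_add ht0]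
    ring_nf
  calc 1 / (1 + t * τ ^ 2) * wt P x τ t
      = (1 + t * τ ^ 2) ^ (-(3:ℝ)/2) * P.kernel t * exp (-x ^ 2 / (2 * (1 + t * τ ^ 2))) := by
        rw [wt_eq, ← hκ]; ring
    _ ≤ (t ^ (-(3:ℝ)/2) * (τ ^ 2) ^ (-(3:ℝ)/2)) * (P.M * t ^ (-P.a - 1)) *
        (q ^ q * (2 * (1 + τ ^ 2)) ^ q * t ^ q * (x ^ 2) ^ (-q)) := by
        gcongr
    _ = _ := by rw [← htpow]; ring

theorem exists_integral_kappa_mul_wt_le (hτ : 0 < τ) (hP : IntegrableOn P.kernel (Ioc 0 1))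
    {q : ℝ} (hq0 : 0 < q) (hq : q < P.a + 3/2) :
    ∃ C, ∀ x ≠ 0,
      ∫ t in Ioi 0, 1 / (1 + t * τ ^ 2) * wt P x τ t ≤ C * (x ^ 2) ^ (-q) := by
  set B := q ^ q * (2 * (1 + τ ^ 2)) ^ q
  set g : ℝ → ℝ := fun t => P.M * (τ ^ 2) ^ (-(3:ℝ)/2) * t ^ (q - P.a - 5/2)
  have hg : IntegrableOn g (Ioi 1) :=
    (integrableOn_Ioi_rpow_of_lt (by linarith) one_pos).const_mul _
  refine ⟨B * ((∫ t in Ioc 0 1, P.kernel t) + ∫ t in Ioi 1, g t), fun x hx => ?_⟩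
  have hF := integrableOn_kappa_mul_wt P (x := x) (τ := τ) (P.integrableOn_kernel_Ioi_zero hP)
  have h1 : ∫ t in Ioc 0 1, 1 / (1 + t * τ ^ 2) * wt P x τ t ≤
      ∫ t in Ioc 0 1, B * (x ^ 2) ^ (-q) * P.kernel t :=
    setIntegral_mono_on (hF.mono_set Ioc_subset_Ioi_self) (hP.const_mul _) measurableSet_Ioc
      fun t ht => kappa_mul_wt_le_of_mem_Ioc P hq0 hx ht
  have h2 : ∫ t in Ioi 1, 1 / (1 + t * τ ^ 2) * wt P x τ t ≤
      ∫ t in Ioi 1, B * (x ^ 2) ^ (-q) * g t :=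
    setIntegral_mono_on (hF.mono_set (Ioi_subset_Ioi zero_le_one)) (hg.const_mul _)
      measurableSet_Ioi fun t ht => kappa_mul_wt_le_of_one_lt P hτ hq0 hx ht
  rw [← Ioc_union_Ioi_eq_Ioi zero_le_one, setIntegral_union (Ioc_disjoint_Ioi le_rfl)
    measurableSet_Ioi (hF.mono_set Ioc_subset_Ioi_self)
    (hF.mono_set (Ioi_subset_Ioi zero_le_one))]
  rw [integral_const_mul] at h1 h2
  linarith

lemma le_wt_of_mem_Ioc_sq (hτ : 0 < τ) (hx₁ : 1 ≤ x ^ 2) (hx₀ : P.t₀ ≤ x ^ 2)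
    (ht : t ∈ Ioc (x ^ 2) (2 * x ^ 2)) :
    (1 + 2 * τ ^ 2) ^ (-(1:ℝ)/2) * (2:ℝ) ^ (-P.a - 1) * P.c₀ * exp (-1 / (2 * τ ^ 2)) *
      (x ^ 2) ^ (-P.a - 3/2) ≤ wt P x τ t := by
  obtain ⟨hst, hts⟩ := ht
  set s := x ^ 2
  have hs : 0 < s := one_pos.trans_le hx₁
  have ht0 : 0 < t := hs.trans hst
  have hc₀ := P.c₀_pos
  have hτs : s * τ ^ 2 ≤ t * τ ^ 2 := by gcongr
  have h1 :
      (1 + 2 * τ ^ 2) ^ (-(1:ℝ)/2) * s ^ (-(1:ℝ)/2) ≤ (1 + t * τ ^ 2) ^ (-(1:ℝ)/2) := by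
    rw [← mul_rpow (by positivity) hs.le]
    exact rpow_le_rpow_of_nonpos (by positivity) (by nlinarith) (by norm_num)
  have h2 : (2:ℝ) ^ (-P.a - 1) * s ^ (-P.a - 1) ≤ t ^ (-P.a - 1) := by
    rw [← mul_rpow zero_le_two hs.le]
    exact rpow_le_rpow_of_nonpos ht0 hts (by linarith [P.a_pos])
  have h3 : P.c₀ ≤ P.L t := P.L_ge t (hx₀.trans hst.le)
  have hL := P.L_pos t ht0
  have h4 : exp (-1 / (2 * τ ^ 2)) ≤ exp (-s / (2 * (1 + t * τ ^ 2))) := by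
    rw [exp_le_exp, neg_div, neg_div, neg_le_neg_iff, div_le_div_iff₀ (by positivity)
      (by positivity)]
    nlinarith
  have hspow : s ^ (-(1:ℝ)/2) * s ^ (-P.a - 1) = s ^ (-P.a - 3/2) := by
    rw [← rpow_add hs]
    ring_nf
  calc _ = ((1 + 2 * τ ^ 2) ^ (-(1:ℝ)/2) * s ^ (-(1:ℝ)/2)) * ((2:ℝ) ^ (-P.a - 1) *
        s ^ (-P.a - 1)) * P.c₀ * exp (-1 / (2 * τ ^ 2)) := by rw [← hspow]; ring
    _ ≤ _ := by unfold wt; gcongr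

theorem exists_le_integral_wt (hτ : 0 < τ) (hP : IntegrableOn P.kernel (Ioi 0)) :
    ∃ c > 0, ∀ x : ℝ, 1 ≤ x ^ 2 → P.t₀ ≤ x ^ 2 →
      c * (x ^ 2) ^ (-P.a - 1/2) ≤ ∫ t in Ioi 0, wt P x τ t := by
  have hc₀ := P.c₀_pos
  refine ⟨(1 + 2 * τ ^ 2) ^ (-(1:ℝ)/2) * (2:ℝ) ^ (-P.a - 1) * P.c₀ *
    exp (-1 / (2 * τ ^ 2)), by positivity, fun x hx₁ hx₀ => ?_⟩
  have hs : 0 < x ^ 2 := one_pos.trans_le hx₁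
  have hwindow : Ioc (x ^ 2) (2 * x ^ 2) ⊆ Ioi 0 := fun t ht => hs.trans ht.1
  have hw := integrableOn_wt P (x := x) (τ := τ) hP
  have hlow := setIntegral_ge_of_const_le_real measurableSet_Ioc measure_Ioc_lt_top.ne
    (fun t ht => le_wt_of_mem_Ioc_sq P hτ hx₁ hx₀ ht) (hw.mono_set hwindow)
  have hmono : ∫ t in Ioc (x ^ 2) (2 * x ^ 2), wt P x τ t ≤ ∫ t in Ioi 0, wt P x τ t :=
    setIntegral_mono_set hw
      ((ae_restrict_iff' measurableSet_Ioi).mpr (.of_forall fun t ht => wt_nonneg P ht))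
      hwindow.eventuallyLE
  have hspow : (x ^ 2) ^ (-P.a - 3/2) * x ^ 2 = (x ^ 2) ^ (-P.a - 1/2) := by
    rw [← rpow_add_one hs.ne']
    ring_nf
  rw [measureReal_def, Real.volume_Ioc, ENNReal.toReal_ofReal (by linarith),
    show 2 * x ^ 2 - x ^ 2 = x ^ 2 by ring, mul_assoc, hspow] at hlow
  exact hlow.trans hmono

end Weight

section Posterior

variable (P : Prior)

lemma postExp_eq_zero (h : ¬ IntegrableOn P.kernel (Ioc 0 1)) (g : ℝ → ℝ) (x τ : ℝ) :
    postExp P g x τ = 0 := by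
  rw [postExp, integral_undef fun hw => h (integrableOn_kernel_of_integrableOn_wt P hw), div_zero]

lemma abs_T_sub_self (τ x : ℝ) : |T P τ x - x| = |x| * postExp P (fun κ => κ) x τ := by
  have hE : 0 ≤ postExp P (fun κ => κ) x τ :=
    div_nonneg (integral_kappa_mul_wt_nonneg P x τ)
      (setIntegral_nonneg measurableSet_Ioi fun _ ht => wt_nonneg P ht)
  rw [T, show ∀ E, x * (1 - E) - x = -(x * E) by intro; ring, abs_neg, abs_mul,
    abs_of_nonneg hE]

theorem exists_postExp_kappa_le {τ : ℝ} (hτ : 0 < τ) (hP : IntegrableOn P.kernel (Ioc 0 1)) {r : ℝ}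
    (hr₀ : 0 < r) (hr₁ : r < 1) :
    ∃ K, ∀ᶠ x in cocompact ℝ, postExp P (fun κ => κ) x τ ≤ K * (x ^ 2) ^ (-r) := by
  obtain ⟨C, hC⟩ := exists_integral_kappa_mul_wt_le P hτ hP (q := P.a + 1/2 + r)
    (by linarith [P.a_pos]) (by linarith)
  obtain ⟨c, hc, hD⟩ := exists_le_integral_wt P hτ (P.integrableOn_kernel_Ioi_zero hP)
  refine ⟨C / c, ?_⟩
  filter_upwards [tendsto_sq_cocompact.eventually_ge_atTop (max 1 P.t₀)] with x hx
  have hx₁ : 1 ≤ x ^ 2 := le_of_max_le_left hx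
  have hs : 0 < x ^ 2 := one_pos.trans_le hx₁
  have hN := hC x (by rintro rfl; simp at hs)
  have hDpos : 0 < c * (x ^ 2) ^ (-P.a - 1/2) := by positivity
  calc postExp P (fun κ => κ) x τ
      ≤ C * (x ^ 2) ^ (-(P.a + 1/2 + r)) / (c * (x ^ 2) ^ (-P.a - 1/2)) :=
        div_le_div₀ ((integral_kappa_mul_wt_nonneg P x τ).trans hN) hN hDpos
          (hD x hx₁ (le_of_max_le_right hx))
    _ = C / c * (x ^ 2) ^ (-r) := by
        rw [show -(P.a + 1/2 + r) = (-P.a - 1/2) + -r by ring, rpow_add hs]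
        field_simp

end Posterior

end OneGroup

/-- Remark A.1: for any fixed `τ ∈ (0,1)`, `|T_τ(x) - x| → 0` as
`|x| → ∞`; large observations are asymptotically left unshrunk. -/
theorem large_signals_unshrunk (P : Prior) (τ : ℝ) (hτ : τ ∈ Ioo (0:ℝ) 1) :
    Tendsto (fun x => |T P τ x - x|) (cocompact ℝ) (nhds 0) := by
  by_cases hP : IntegrableOn P.kernel (Ioc 0 1)
  · obtain ⟨K, hK⟩ := exists_postExp_kappa_le P hτ.1 hP (r := 3/4) (by norm_num) (by norm_num)
    have hlim : Tendsto (fun x : ℝ => K * (x ^ 2) ^ (-(1/4 : ℝ))) (cocompact ℝ) (nhds 0) := by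
      simpa using ((tendsto_rpow_neg_atTop (by norm_num : (0:ℝ) < 1/4)).comp
        tendsto_sq_cocompact).const_mul K
    refine squeeze_zero' (.of_forall fun x => abs_nonneg _) ?_ hlim
    filter_upwards [hK] with x hx
    have habs : |x| = (x ^ 2) ^ (1/2 : ℝ) := by rw [← sqrt_eq_rpow, sqrt_sq_eq_abs]
    calc |T P τ x - x| = |x| * postExp P (fun κ => κ) x τ := abs_T_sub_self P τ x
      _ ≤ |x| * (K * (x ^ 2) ^ (-(3/4 : ℝ))) := by gcongr
      _ = K * (x ^ 2) ^ (-(1/4 : ℝ)) := by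
        rw [habs, mul_left_comm, ← rpow_add' (sq_nonneg x) (by norm_num)]
        norm_num
  · -- an improper prior makes the integrals in `postExp` junk `0`, so `T P τ x = x`
    simp [abs_T_sub_self, postExp_eq_zero P hP]
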